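/- The umlaut-marginal of a tensor product factorizes: for full-rank bipartite states ρ_{AB} and σ_{A'B'}, the umlaut-marginal of ρ_{AB} ⊗ σ_{A'B'} on BB' equals ρ̈_B ⊗ σ̈_{B'}, where ρ̈_B and σ̈_{B'} are the umlaut-marginals of ρ_{AB} and σ_{A'B'} respectively. -/

import Mathlib

open scoped Kronecker ComplexOrder Classical
open Matrix

noncomputable section

variable {n a b : Type*} [Fintype n] [DecidableEq n]
  [Fintype a] [DecidableEq a] [Fintype b] [DecidableEq b]

/-- Matrix logarithm via continuous functional calculus. -/
def mlog (A : Matrix n n ℂ) : Matrix n n ℂ := cfc Real.log A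

/-- Matrix exponential via continuous functional calculus. -/
def mexp (A : Matrix n n ℂ) : Matrix n n ℂ := cfc Real.exp A

/-- Matrix real power via continuous functional calculus. -/
def mpow (A : Matrix n n ℂ) (α : ℝ) : Matrix n n ℂ := cfc (fun x : ℝ => x ^ α) A

/-- A density operator: positive semidefinite with unit trace. -/
def IsDensity (ρ : Matrix n n ℂ) : Prop := ρ.PosSemidef ∧ ρ.trace = 1

/-- `supp ρ ⊆ supp σ`, expressed as `ker σ ⊆ ker ρ`. -/
def suppLE (ρ σ : Matrix n n ℂ) : Prop := ∀ v : n → ℂ, σ.mulVec v = 0 → ρ.mulVec v = 0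

/-- Umegaki relative entropy, `+∞` on support violation. -/
def relEntropy (ρ σ : Matrix n n ℂ) : EReal :=
  if suppLE ρ σ then (((ρ * (mlog ρ - mlog σ)).trace.re : ℝ) : EReal) else ⊤

/-- Partial trace over the second (B) factor. -/
def ptraceB (ρ : Matrix (a × b) (a × b) ℂ) : Matrix a a ℂ :=
  Matrix.of fun i j => ∑ k : b, ρ (i, k) (j, k)

/-- Partial trace over the first (A) factor. -/
def ptraceA (ρ : Matrix (a × b) (a × b) ℂ) : Matrix b b ℂ :=
  Matrix.of fun k l => ∑ i : a, ρ (i, k) (i, l)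

/-- Quantum umlaut information `U(A;B)_ρ = min_{σ_B} D(ρ_A ⊗ σ_B ‖ ρ_{AB})`. -/
def umlaut (ρ : Matrix (a × b) (a × b) ℂ) : EReal :=
  ⨅ σ : {σ : Matrix b b ℂ // IsDensity σ}, relEntropy (ptraceB ρ ⊗ₖ σ.1) ρ


/-- The operator `X_B = Tr_A[(ρ_A ⊗ 1_B) log ρ_{AB}]`. -/
def Xop (ρ : Matrix (a × b) (a × b) ℂ) : Matrix b b ℂ :=
  ptraceA ((ptraceB ρ ⊗ₖ (1 : Matrix b b ℂ)) * mlog ρ)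

/-- The umlaut-marginal `ρ̈_B = exp(X_B)/Tr[exp(X_B)]`. -/
def umlautMarginal (ρ : Matrix (a × b) (a × b) ℂ) : Matrix b b ℂ :=
  (((mexp (Xop ρ)).trace.re)⁻¹ : ℝ) • mexp (Xop ρ)

/-!
Both the logarithm and the partial traces respect the tensor structure: for positive definite
`ρ` and `σ` one has `log (ρ ⊗ σ) = log ρ ⊗ 1 + 1 ⊗ log σ`, and since `ρ` and `σ` have unit trace
the operator `X` of the product is `X_ρ ⊗ 1 + 1 ⊗ X_σ`. The two summands commute, so `exp` turns
the sum into the Kronecker product `exp X_ρ ⊗ exp X_σ`, whose trace is the product of the traces.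
Both functional-calculus identities come from two facts: star-algebra homomorphisms
(`X ↦ X ⊗ 1`, `X ↦ 1 ⊗ X`, reindexing) commute with the continuous functional calculus, and the
exponential of a sum of commuting matrices is the product of their exponentials.
-/

namespace Matrix

variable {ι κ 𝕜 : Type*}

theorem IsHermitian.kronecker {α : Type*} [CommSemiring α] [StarRing α] {A : Matrix ι ι α}
    {B : Matrix κ κ α} (hA : A.IsHermitian) (hB : B.IsHermitian) : (A ⊗ₖ B).IsHermitian := by
  rw [IsHermitian, conjTranspose_kronecker, hA.eq, hB.eq]

theorem reindex_prodProdProdComm_kronecker {α p q p' q' : Type*} [CommSemiring α]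
    (M : Matrix p p α) (N : Matrix p' p' α) (P : Matrix q q α) (Q : Matrix q' q' α) :
    reindex (Equiv.prodProdProdComm p q p' q') (Equiv.prodProdProdComm p q p' q')
      ((M ⊗ₖ P) ⊗ₖ (N ⊗ₖ Q)) = (M ⊗ₖ N) ⊗ₖ (P ⊗ₖ Q) := by
  ext ⟨⟨i, i'⟩, k, k'⟩ ⟨⟨j, j'⟩, l, l'⟩
  simp only [reindex_apply, submatrix_apply, kroneckerMap_apply, Equiv.prodProdProdComm_symm,
    Equiv.prodProdProdComm_apply]
  ring

variable [Fintype ι] [Fintype κ]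

theorem IsHermitian.im_trace {A : Matrix ι ι ℂ} (hA : A.IsHermitian) : A.trace.im = 0 :=
  Complex.conj_eq_iff_im.mp (by rw [← Complex.star_def, ← trace_conjTranspose, hA.eq])

theorem IsHermitian.re_trace_kronecker {A : Matrix ι ι ℂ} {B : Matrix κ κ ℂ} (hA : A.IsHermitian) :
    (A ⊗ₖ B).trace.re = A.trace.re * B.trace.re := by
  rw [trace_kronecker, Complex.mul_re, hA.im_trace, zero_mul, sub_zero]

variable [DecidableEq ι] [DecidableEq κ]

section StarAlgHom

variable {α : Type*} [CommSemiring α] [StarRing α]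

def kroneckerOneStarAlgHom : Matrix ι ι α →⋆ₐ[α] Matrix (ι × κ) (ι × κ) α where
  toFun A := A ⊗ₖ 1
  map_one' := one_kronecker_one
  map_mul' A B := by rw [← mul_kronecker_mul, mul_one]
  map_zero' := zero_kronecker _
  map_add' A B := add_kronecker _ _ _
  commutes' r := by simp [Algebra.algebraMap_eq_smul_one, smul_kronecker]
  map_star' A := by simp [star_eq_conjTranspose, conjTranspose_kronecker]

def oneKroneckerStarAlgHom : Matrix κ κ α →⋆ₐ[α] Matrix (ι × κ) (ι × κ) α where
  toFun B := 1 ⊗ₖ B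
  map_one' := one_kronecker_one
  map_mul' A B := by rw [← mul_kronecker_mul, mul_one]
  map_zero' := kronecker_zero _
  map_add' A B := kronecker_add _ _ _
  commutes' r := by simp [Algebra.algebraMap_eq_smul_one, kronecker_smul]
  map_star' A := by simp [star_eq_conjTranspose, conjTranspose_kronecker]

def reindexStarAlgEquiv (e : ι ≃ κ) : Matrix ι ι α ≃⋆ₐ[α] Matrix κ κ α :=
  .ofAlgEquiv (reindexAlgEquiv α α e) fun A => (conjTranspose_reindex e e A).symm

end StarAlgHom

variable [RCLike 𝕜]

theorem continuousOn_spectrum_real (f : ℝ → ℝ) (A : Matrix ι ι 𝕜) :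
    ContinuousOn f (spectrum ℝ A) :=
  finite_real_spectrum.continuousOn f

theorem IsHermitian.cfc_kronecker_one (f : ℝ → ℝ) {A : Matrix ι ι 𝕜} (hA : A.IsHermitian) :
    cfc f (A ⊗ₖ (1 : Matrix κ κ 𝕜)) = cfc f A ⊗ₖ 1 :=
  ((kroneckerOneStarAlgHom (α := 𝕜) (κ := κ)).map_cfc f A (continuousOn_spectrum_real f A)
    (continuous_matrix fun _ _ => (continuous_id.matrix_elem _ _).mul continuous_const)
    hA.isSelfAdjoint (hA.kronecker isHermitian_one)).symm

theorem IsHermitian.cfc_one_kronecker (f : ℝ → ℝ) {B : Matrix κ κ 𝕜} (hB : B.IsHermitian) :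
    cfc f ((1 : Matrix ι ι 𝕜) ⊗ₖ B) = 1 ⊗ₖ cfc f B :=
  ((oneKroneckerStarAlgHom (α := 𝕜) (ι := ι)).map_cfc f B (continuousOn_spectrum_real f B)
    (continuous_matrix fun _ _ => continuous_const.mul (continuous_id.matrix_elem _ _))
    hB.isSelfAdjoint (isHermitian_one.kronecker hB)).symm

theorem IsHermitian.cfc_reindex (f : ℝ → ℝ) (e : ι ≃ κ) {A : Matrix ι ι 𝕜} (hA : A.IsHermitian) :
    cfc f (Matrix.reindex e e A) = Matrix.reindex e e (cfc f A) :=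
  (StarAlgHomClass.map_cfc (reindexStarAlgEquiv e) f A (continuousOn_spectrum_real f A)
    (continuous_id.matrix_reindex e e) hA.isSelfAdjoint (hA.reindex e)).symm

/-- `NormedSpace.exp` needs only the topology of `Matrix ι ι 𝕜`, but its comparison with `cfc` is
stated for normed algebras, so a matrix norm is supplied just for this step. -/
theorem IsHermitian.cfc_real_exp_eq_exp {A : Matrix ι ι 𝕜} (hA : A.IsHermitian) :
    cfc Real.exp A = NormedSpace.exp A :=
  @CFC.real_exp_eq_normedSpace_exp _ Matrix.linftyOpNormedRing _ Matrix.linftyOpNormedAlgebra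
    IsHermitian.instContinuousFunctionalCalculus A hA.isSelfAdjoint

theorem IsHermitian.cfc_exp_add_of_commute {A B : Matrix ι ι 𝕜} (hA : A.IsHermitian)
    (hB : B.IsHermitian) (hAB : Commute A B) :
    cfc Real.exp (A + B) = cfc Real.exp A * cfc Real.exp B := by
  rw [hA.cfc_real_exp_eq_exp, hB.cfc_real_exp_eq_exp, (hA.add hB).cfc_real_exp_eq_exp,
    exp_add_of_commute A B hAB]

theorem IsHermitian.cfc_exp_kronecker_add {A : Matrix ι ι 𝕜} {B : Matrix κ κ 𝕜}
    (hA : A.IsHermitian) (hB : B.IsHermitian) :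
    cfc Real.exp (A ⊗ₖ (1 : Matrix κ κ 𝕜) + (1 : Matrix ι ι 𝕜) ⊗ₖ B)
      = cfc Real.exp A ⊗ₖ cfc Real.exp B := by
  have hA1 : (A ⊗ₖ (1 : Matrix κ κ 𝕜)).IsHermitian := hA.kronecker isHermitian_one
  have h1B : ((1 : Matrix ι ι 𝕜) ⊗ₖ B).IsHermitian := isHermitian_one.kronecker hB
  have hcomm : Commute (A ⊗ₖ (1 : Matrix κ κ 𝕜)) ((1 : Matrix ι ι 𝕜) ⊗ₖ B) := by
    simp only [Commute, SemiconjBy, ← mul_kronecker_mul, mul_one, one_mul]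
  rw [hA1.cfc_exp_add_of_commute h1B hcomm, hA.cfc_kronecker_one, hB.cfc_one_kronecker,
    ← mul_kronecker_mul, mul_one, one_mul]

theorem IsHermitian.cfc_log_cfc_exp {A : Matrix ι ι 𝕜} (hA : A.IsHermitian) :
    cfc Real.log (cfc Real.exp A) = A := by
  rw [← cfc_comp' Real.log Real.exp A ((finite_real_spectrum.image _).continuousOn _)
    (continuousOn_spectrum_real _ _) hA.isSelfAdjoint]
  simp [cfc_id' ℝ A hA.isSelfAdjoint]

theorem PosDef.cfc_exp_cfc_log {A : Matrix ι ι 𝕜} (hA : A.PosDef) :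
    cfc Real.exp (cfc Real.log A) = A := by
  rw [← cfc_comp' Real.exp Real.log A ((finite_real_spectrum.image _).continuousOn _)
    (continuousOn_spectrum_real _ _) hA.isHermitian.isSelfAdjoint]
  refine (cfc_congr fun x hx => ?_).trans (cfc_id' ℝ A hA.isHermitian.isSelfAdjoint)
  obtain ⟨i, rfl⟩ := hA.isHermitian.spectrum_real_eq_range_eigenvalues ▸ hx
  exact Real.exp_log (hA.eigenvalues_pos i)

theorem PosDef.cfc_log_kronecker {A : Matrix ι ι 𝕜} {B : Matrix κ κ 𝕜} (hA : A.PosDef)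
    (hB : B.PosDef) :
    cfc Real.log (A ⊗ₖ B) = cfc Real.log A ⊗ₖ 1 + 1 ⊗ₖ cfc Real.log B := by
  have hlogA : (cfc Real.log A).IsHermitian := cfc_predicate Real.log A
  have hlogB : (cfc Real.log B).IsHermitian := cfc_predicate Real.log B
  have hexp : A ⊗ₖ B = cfc Real.exp (cfc Real.log A ⊗ₖ 1 + 1 ⊗ₖ cfc Real.log B) := by
    rw [hlogA.cfc_exp_kronecker_add hlogB, hA.cfc_exp_cfc_log, hB.cfc_exp_cfc_log]
  rw [hexp, IsHermitian.cfc_log_cfc_exp]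
  exact (hlogA.kronecker isHermitian_one).add (isHermitian_one.kronecker hlogB)

end Matrix

section PartialTrace

variable {p q p' q' : Type*}

local notation "ε" => Equiv.prodProdProdComm p q p' q'

theorem ptraceA_add [Fintype p] (X Y : Matrix (p × q) (p × q) ℂ) :
    ptraceA (X + Y) = ptraceA X + ptraceA Y := by
  ext k l
  simp [ptraceA, Finset.sum_add_distrib]

theorem ptraceA_reindex_kronecker [Fintype p] [Fintype p'] (X : Matrix (p × q) (p × q) ℂ)
    (Y : Matrix (p' × q') (p' × q') ℂ) :
    ptraceA (reindex ε ε (X ⊗ₖ Y)) = ptraceA X ⊗ₖ ptraceA Y := by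
  ext ⟨k, k'⟩ ⟨l, l'⟩
  simp [ptraceA, Fintype.sum_prod_type, Finset.sum_mul_sum]

theorem ptraceB_reindex_kronecker [Fintype q] [Fintype q'] (X : Matrix (p × q) (p × q) ℂ)
    (Y : Matrix (p' × q') (p' × q') ℂ) :
    ptraceB (reindex ε ε (X ⊗ₖ Y)) = ptraceB X ⊗ₖ ptraceB Y := by
  ext ⟨i, i'⟩ ⟨j, j'⟩
  simp [ptraceB, Fintype.sum_prod_type, Finset.sum_mul_sum]

theorem ptraceA_kronecker_one [Fintype p] [DecidableEq q] (M : Matrix p p ℂ) :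
    ptraceA (M ⊗ₖ (1 : Matrix q q ℂ)) = M.trace • 1 := by
  ext k l
  simp [ptraceA, Matrix.trace, Matrix.one_apply]

theorem trace_ptraceB [Fintype p] [Fintype q] (X : Matrix (p × q) (p × q) ℂ) :
    (ptraceB X).trace = X.trace := by
  simp [ptraceB, Matrix.trace, Fintype.sum_prod_type]

theorem conjTranspose_ptraceA [Fintype p] (X : Matrix (p × q) (p × q) ℂ) :
    (ptraceA X)ᴴ = ptraceA Xᴴ := by
  ext k l
  simp [ptraceA]

theorem conjTranspose_ptraceB [Fintype q] (X : Matrix (p × q) (p × q) ℂ) :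
    (ptraceB X)ᴴ = ptraceB Xᴴ := by
  ext i j
  simp [ptraceB]

theorem ptraceA_kronecker_one_mul_comm [Fintype p] [Fintype q] [DecidableEq q] (M : Matrix p p ℂ)
    (X : Matrix (p × q) (p × q) ℂ) :
    ptraceA ((M ⊗ₖ (1 : Matrix q q ℂ)) * X) = ptraceA (X * (M ⊗ₖ (1 : Matrix q q ℂ))) := by
  ext k l
  simp only [ptraceA, of_apply, mul_apply, kroneckerMap_apply, one_apply, mul_ite, mul_one,
    mul_zero, ite_mul, zero_mul, Fintype.sum_prod_type, Finset.sum_ite_eq, Finset.sum_ite_eq',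
    Finset.mem_univ, if_true]
  rw [Finset.sum_comm]
  simp [mul_comm]

end PartialTrace

theorem Xop_isHermitian {ρ : Matrix (a × b) (a × b) ℂ} (hρ : ρ.IsHermitian) :
    (Xop ρ).IsHermitian := by
  have hlog : (mlog ρ).IsHermitian := cfc_predicate Real.log ρ
  have hmarg : (ptraceB ρ).IsHermitian := (conjTranspose_ptraceB ρ).trans (congrArg ptraceB hρ)
  rw [IsHermitian, Xop, conjTranspose_ptraceA, conjTranspose_mul, hlog.eq,
    conjTranspose_kronecker, hmarg.eq, conjTranspose_one, ptraceA_kronecker_one_mul_comm]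

section Tensor

variable {a' b' : Type*} [Fintype a'] [DecidableEq a'] [Fintype b'] [DecidableEq b']

local notation "ε" => Equiv.prodProdProdComm a b a' b'

theorem mlog_reindex_kronecker {ρ : Matrix (a × b) (a × b) ℂ} {σ : Matrix (a' × b') (a' × b') ℂ}
    (hρ : ρ.PosDef) (hσ : σ.PosDef) :
    mlog (reindex ε ε (ρ ⊗ₖ σ)) = reindex ε ε (mlog ρ ⊗ₖ 1 + 1 ⊗ₖ mlog σ) :=
  ((hρ.isHermitian.kronecker hσ.isHermitian).cfc_reindex _ _).trans
    (congrArg _ (hρ.cfc_log_kronecker hσ))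

theorem Xop_reindex_kronecker {ρ : Matrix (a × b) (a × b) ℂ} {σ : Matrix (a' × b') (a' × b') ℂ}
    (hρ : ρ.PosDef) (hσ : σ.PosDef) :
    Xop (reindex ε ε (ρ ⊗ₖ σ)) = σ.trace • (Xop ρ ⊗ₖ 1) + ρ.trace • (1 ⊗ₖ Xop σ) := by
  have hmarg : ptraceB (reindex ε ε (ρ ⊗ₖ σ)) ⊗ₖ (1 : Matrix (b × b') (b × b') ℂ)
      = reindex ε ε ((ptraceB ρ ⊗ₖ 1) ⊗ₖ (ptraceB σ ⊗ₖ 1)) := by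
    rw [ptraceB_reindex_kronecker, ← one_kronecker_one, reindex_prodProdProdComm_kronecker]
  rw [Xop, hmarg, mlog_reindex_kronecker hρ hσ, ← coe_reindexAlgEquiv ℂ ℂ, ← map_mul, mul_add,
    ← mul_kronecker_mul, ← mul_kronecker_mul, mul_one, mul_one, map_add, coe_reindexAlgEquiv,
    ptraceA_add, ptraceA_reindex_kronecker, ptraceA_reindex_kronecker, ptraceA_kronecker_one,
    ptraceA_kronecker_one, trace_ptraceB, trace_ptraceB, ← Xop, ← Xop, kronecker_smul,
    smul_kronecker]

end Tensor

/-- the umlaut-marginal of a tensor product factorises. -/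
theorem umlautMarginal_tensor {a' b' : Type*} [Fintype a'] [DecidableEq a'] [Fintype b']
    [DecidableEq b'] (ρ : Matrix (a × b) (a × b) ℂ) (σ : Matrix (a' × b') (a' × b') ℂ)
    (hρ : ρ.PosDef) (hρt : ρ.trace = 1) (hσ : σ.PosDef) (hσt : σ.trace = 1) :
    umlautMarginal (Matrix.reindex (Equiv.prodProdProdComm a b a' b')
        (Equiv.prodProdProdComm a b a' b') (ρ ⊗ₖ σ))
      = umlautMarginal ρ ⊗ₖ umlautMarginal σ := by
  have hXρ := Xop_isHermitian hρ.isHermitian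
  have hXσ := Xop_isHermitian hσ.isHermitian
  have hexp : mexp (Xop (reindex (Equiv.prodProdProdComm a b a' b')
      (Equiv.prodProdProdComm a b a' b') (ρ ⊗ₖ σ))) = mexp (Xop ρ) ⊗ₖ mexp (Xop σ) := by
    unfold mexp
    rw [Xop_reindex_kronecker hρ hσ, hρt, hσt, one_smul, one_smul, hXρ.cfc_exp_kronecker_add hXσ]
  have hexpρ : (mexp (Xop ρ)).IsHermitian := cfc_predicate Real.exp (Xop ρ)
  rw [umlautMarginal, umlautMarginal, umlautMarginal, hexp, hexpρ.re_trace_kronecker,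
    mul_inv, smul_kronecker, kronecker_smul, smul_smul]

end
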